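/- Let Γ be a finite group acting on two finite sets X and Y such that: (i) each σ ∈ Γ fixes the same number of points in X as in Y, and (ii) every Γ-orbit on X and on Y has size at most 2. Then the actions of Γ on X and Y are permutation isomorphic, i.e., there is a Γ-equivariant bijection X → Y. -/
import Mathlib


open CategoryTheory

/-- The field of values `ℚ(g)` of the conjugacy class of `g`: the subfield of `ℂ`
generated over `ℚ` by the values `χ(g)` for `χ` the irreducible complex characters of `G`. -/
noncomputable def classFieldOf (G : Type) [Group G] [Fintype G] (g : G) :
    IntermediateField ℚ ℂ :=
  IntermediateField.adjoin ℚ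
    {x : ℂ | ∃ V : FDRep ℂ G, Simple V ∧ FDRep.character V g = x}

/-- The set of irreducible complex characters of `G`, as functions `G → ℂ`. -/
def irrChar (G : Type) [Group G] [Fintype G] : Set (G → ℂ) :=
  {f | ∃ V : FDRep ℂ G, Simple V ∧ ∀ g, FDRep.character V g = f g}

/-- The field of values `ℚ(χ)` of a character, i.e. the subfield of `ℂ` generated
over `ℚ` by all the values of `χ`. -/
noncomputable def charFieldOf {G : Type} (f : G → ℂ) : IntermediateField ℚ ℂ :=
  IntermediateField.adjoin ℚ (Set.range f)

/-- The field of values of a conjugacy class. -/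
noncomputable def classFieldCl (G : Type) [Group G] [Fintype G] (K : ConjClasses G) :
    IntermediateField ℚ ℂ :=
  classFieldOf G (Quotient.out K)

/-- `h(G)`: the maximum number of conjugacy classes of `G` sharing a common field of values. -/
noncomputable def hOf (G : Type) [Group G] [Fintype G] : ℕ :=
  sSup {n : ℕ | ∃ F : IntermediateField ℚ ℂ,
    n = Set.ncard {K : ConjClasses G | classFieldCl G K = F}}

/-- `f(G)`: the maximum number of irreducible characters of `G` sharing a common field of values. -/
noncomputable def fOf (G : Type) [Group G] [Fintype G] : ℕ :=
  sSup {n : ℕ | ∃ F : IntermediateField ℚ ℂ,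
    n = Set.ncard {f ∈ irrChar G | charFieldOf f = F}}

/-- The `n`-th cyclotomic field `ℚ(ζ_n)` as a subfield of `ℂ`. -/
noncomputable def cyclo (n : ℕ) : IntermediateField ℚ ℂ :=
  IntermediateField.adjoin ℚ {Complex.exp (2 * Real.pi * Complex.I / n)}

set_option linter.unusedSectionVars false
set_option linter.unnecessarySeqFocus false


open MulAction

section AuxChar

variable {Γ : Type*} [Group Γ] [Finite Γ]

private lemma aux_mul_mem (H : Subgroup Γ) (h : H.index ≤ 2) {a b : Γ}
    (ha : a ∉ H) (hb : b ∉ H) : a * b ∈ H := by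
  have h0 : H.index ≠ 0 := Subgroup.index_ne_zero_of_finite
  have h12 : H.index = 1 ∨ H.index = 2 := by omega
  rcases h12 with h1 | h2
  · exact absurd (by simp [Subgroup.index_eq_one.1 h1] : a ∈ H) ha
  · rw [Subgroup.mul_mem_iff_of_index_two h2]; tauto

private lemma aux_conj_mem (H : Subgroup Γ) (h : H.index ≤ 2) (g τ : Γ) :
    g⁻¹ * τ * g ∈ H ↔ τ ∈ H := by
  have h0 : H.index ≠ 0 := Subgroup.index_ne_zero_of_finite
  have h12 : H.index = 1 ∨ H.index = 2 := by omega
  rcases h12 with h1 | h2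
  · simp [Subgroup.index_eq_one.1 h1]
  · rw [mul_assoc, Subgroup.mul_mem_iff_of_index_two h2,
      Subgroup.mul_mem_iff_of_index_two h2, inv_mem_iff]
    tauto

open Classical in
private noncomputable def sgnChar (H : Subgroup Γ) : Γ →* ℂ :=
  if h : H.index ≤ 2 then
    { toFun := fun σ => if σ ∈ H then 1 else -1
      map_one' := by simp [H.one_mem]
      map_mul' := by
        intro a b
        by_cases ha : a ∈ H <;> by_cases hb : b ∈ H
        · simp [ha, hb, H.mul_mem ha hb]
        · have hab : a * b ∉ H := fun hab => hb (by simpa using H.mul_mem (H.inv_mem ha) hab)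
          simp [ha, hb, hab]
        · have hab : a * b ∉ H := fun hab => ha (by simpa using H.mul_mem hab (H.inv_mem hb))
          simp [ha, hb, hab]
        · simp [ha, hb, aux_mul_mem H h ha hb] }
  else 1

open Classical in
private lemma sgnChar_apply (H : Subgroup Γ) (h : H.index ≤ 2) (σ : Γ) :
    sgnChar H σ = if σ ∈ H then 1 else -1 := by
  rw [sgnChar, dif_pos h]; rfl

private lemma sgnChar_inj {H K : Subgroup Γ} (hH : H.index ≤ 2) (hK : K.index ≤ 2)
    (h : sgnChar H = sgnChar K) : H = K := by
  classical
  ext σ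
  have h1 := congrFun (congrArg (fun f : Γ →* ℂ => (f : Γ → ℂ)) h) σ
  simp only [sgnChar_apply H hH, sgnChar_apply K hK] at h1
  by_cases h2 : σ ∈ H <;> by_cases h3 : σ ∈ K <;> simp [h2, h3] at h1 ⊢ <;> norm_num at h1

end AuxChar

open MulAction


section FC
variable {Γ : Type*} [Group Γ] [Finite Γ]

open Classical in
private lemma fixCount {Z : Type*} [Fintype Z] [Fintype (Subgroup Γ)]
    [MulAction Γ Z] (σ : Γ) :
    {z : Z | σ • z = z}.ncard = ∑ K : Subgroup Γ,
      if σ ∈ K then {z : Z | stabilizer Γ z = K}.ncard else 0 := by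
  classical
  rw [Set.ncard_eq_toFinset_card']
  rw [Finset.card_eq_sum_card_fiberwise
    (f := fun z => stabilizer Γ z) (t := Finset.univ) (fun z _ => Finset.mem_univ _)]
  refine Finset.sum_congr rfl fun K _ => ?_
  by_cases hσ : σ ∈ K
  · rw [if_pos hσ, Set.ncard_eq_toFinset_card']
    congr 1
    ext z
    simp only [Finset.mem_filter, Set.mem_toFinset, Set.mem_setOf_eq]
    exact ⟨fun h => h.2, fun h => ⟨mem_stabilizer_iff.1 (h ▸ hσ), h⟩⟩
  · rw [if_neg hσ, Finset.card_eq_zero, Finset.filter_eq_empty_iff]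
    intro z hz hK
    have hz' : σ • z = z := by simpa using hz
    exact hσ (hK ▸ mem_stabilizer_iff.2 hz')

private lemma fiberCount {X Y : Type*} [Finite X] [Finite Y] [MulAction Γ X] [MulAction Γ Y]
    (hfix : ∀ σ : Γ, {x : X | σ • x = x}.ncard = {y : Y | σ • y = y}.ncard)
    (hiX : ∀ x : X, (stabilizer Γ x).index ≤ 2)
    (hiY : ∀ y : Y, (stabilizer Γ y).index ≤ 2)
    (H : Subgroup Γ) :
    {x : X | stabilizer Γ x = H}.ncard = {y : Y | stabilizer Γ y = H}.ncard := by
  classical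
  haveI : Fintype X := Fintype.ofFinite X
  haveI : Fintype Y := Fintype.ofFinite Y
  haveI : Finite (Subgroup Γ) := Finite.of_injective _ SetLike.coe_injective
  haveI : Fintype (Subgroup Γ) := Fintype.ofFinite _
  set a : Subgroup Γ → ℕ := fun K => {x : X | stabilizer Γ x = K}.ncard with ha
  set b : Subgroup Γ → ℕ := fun K => {y : Y | stabilizer Γ y = K}.ncard with hb
  set T : Finset (Subgroup Γ) := Finset.univ.filter (fun K => K.index ≤ 2) with hT
  have hmemT : ∀ K ∈ T, K.index ≤ 2 := fun K hK => (Finset.mem_filter.1 hK).2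
  have haT : ∀ K, K ∉ T → a K = 0 := by
    intro K hK
    have he : {x : X | stabilizer Γ x = K} = ∅ := by
      ext x
      simp only [Set.mem_setOf_eq, Set.mem_empty_iff_false, iff_false]
      intro hx
      exact hK (Finset.mem_filter.2 ⟨Finset.mem_univ _, hx ▸ hiX x⟩)
    simp [ha, he]
  have hbT : ∀ K, K ∉ T → b K = 0 := by
    intro K hK
    have he : {y : Y | stabilizer Γ y = K} = ∅ := by
      ext y
      simp only [Set.mem_setOf_eq, Set.mem_empty_iff_false, iff_false]
      intro hy
      exact hK (Finset.mem_filter.2 ⟨Finset.mem_univ _, hy ▸ hiY y⟩)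
    simp [hb, he]
  have hsum : ∀ σ : Γ, ∑ K ∈ T, (if σ ∈ K then (a K : ℂ) else 0)
      = ∑ K ∈ T, (if σ ∈ K then (b K : ℂ) else 0) := by
    intro σ
    have e1 : ∑ K ∈ T, (if σ ∈ K then a K else 0)
        = ∑ K : Subgroup Γ, (if σ ∈ K then a K else 0) :=
      Finset.sum_subset (Finset.subset_univ T) (fun K _ hK => by simp [haT K hK])
    have e2 : ∑ K ∈ T, (if σ ∈ K then b K else 0)
        = ∑ K : Subgroup Γ, (if σ ∈ K then b K else 0) :=
      Finset.sum_subset (Finset.subset_univ T) (fun K _ hK => by simp [hbT K hK])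
    have hnat : ∑ K ∈ T, (if σ ∈ K then a K else 0) = ∑ K ∈ T, (if σ ∈ K then b K else 0) := by
      rw [e1, e2]
      simp only [ha, hb]
      rw [← fixCount (Z := X) σ, ← fixCount (Z := Y) σ]
      exact hfix σ
    exact_mod_cast hnat
  set d : Subgroup Γ → ℂ := fun K => (a K : ℂ) - b K with hd
  have hd0 : ∑ K ∈ T, d K = 0 := by
    have h1 := hsum 1
    simp only [Subgroup.one_mem, if_true] at h1
    simp [hd, Finset.sum_sub_distrib, h1]
  have hdchi : ∀ σ : Γ, ∑ K ∈ T, d K * (sgnChar K σ) = 0 := by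
    intro σ
    have h1 := hsum σ
    have hcongr : ∀ K ∈ T, d K * (sgnChar K σ)
        = 2 * ((if σ ∈ K then (a K : ℂ) else 0) - (if σ ∈ K then (b K : ℂ) else 0)) - d K := by
      intro K hK
      rw [sgnChar_apply K (hmemT K hK) σ]
      by_cases hσ : σ ∈ K <;> simp only [hσ, if_true, if_false] <;> simp [hd] <;> ring
    rw [Finset.sum_congr rfl hcongr, Finset.sum_sub_distrib, ← Finset.mul_sum,
      Finset.sum_sub_distrib, h1, sub_self, mul_zero, hd0, sub_self]
  have li := linearIndependent_iff'.1 (linearIndependent_monoidHom Γ ℂ)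
  set g : (Γ →* ℂ) → ℂ := fun f => if h : ∃ K ∈ T, sgnChar K = f then d h.choose else 0 with hg
  have hgval : ∀ K ∈ T, g (sgnChar K) = d K := by
    intro K hK
    have hex : ∃ L ∈ T, sgnChar L = sgnChar K := ⟨K, hK, rfl⟩
    rw [hg]
    simp only [dif_pos hex]
    obtain ⟨hL, hLK⟩ := hex.choose_spec
    rw [sgnChar_inj (hmemT _ hL) (hmemT _ hK) hLK]
  have hzero : ∀ f ∈ T.image sgnChar, g f = 0 := by
    apply li (T.image sgnChar) g
    rw [Finset.sum_image (fun K hK L hL h => sgnChar_inj (hmemT K hK) (hmemT L hL) h)]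
    funext σ
    rw [Finset.sum_apply]
    have : ∀ K ∈ T, (g (sgnChar K) • ((sgnChar K : Γ →* ℂ) : Γ → ℂ)) σ
        = d K * sgnChar K σ := by
      intro K hK
      rw [hgval K hK]
      simp [smul_eq_mul]
    rw [Finset.sum_congr rfl this, hdchi σ]
    rfl
  by_cases hTH : H ∈ T
  · have h1 := hzero (sgnChar H) (Finset.mem_image_of_mem _ hTH)
    rw [hgval H hTH] at h1
    have h2 : (a H : ℂ) = b H := by rwa [hd, sub_eq_zero] at h1
    exact_mod_cast h2
  · rw [show {x : X | stabilizer Γ x = H}.ncard = a H from rfl,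
      show {y : Y | stabilizer Γ y = H}.ncard = b H from rfl, haT H hTH, hbT H hTH]

end FC

open MulAction

private lemma transfer {Γ : Type*} [Group Γ] {Z : Type*} {W : Type*} [MulAction Γ Z]
    [MulAction Γ W] (z : Z) (w : W) (hzw : stabilizer Γ z = stabilizer Γ w) (g g' : Γ)
    (h : g • z = g' • z) : g • w = g' • w := by
  have h1 : g⁻¹ * g' ∈ stabilizer Γ z := by
    rw [mem_stabilizer_iff, mul_smul, ← h, inv_smul_smul]
  rw [hzw, mem_stabilizer_iff] at h1
  have h2 : (g * (g⁻¹ * g')) • w = g • w := by rw [mul_smul, h1]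
  rw [mul_inv_cancel_left] at h2
  exact h2.symm

private lemma equivariant_of_isEmpty {Γ : Type*} [Group Γ] (X : Type*) (Y : Type*) [Finite Y]
    [MulAction Γ X] [MulAction Γ Y] [IsEmpty X]
    (hcnt : ∀ H : Subgroup Γ, {x : X | stabilizer Γ x = H}.ncard
      = {y : Y | stabilizer Γ y = H}.ncard) :
    ∃ e : X ≃ Y, ∀ (σ : Γ) (x : X), e (σ • x) = σ • e x := by
  haveI : IsEmpty Y := by
    rw [← not_nonempty_iff]
    rintro ⟨y⟩
    have h1 := hcnt (stabilizer Γ y)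
    have h2 : ({x : X | stabilizer Γ x = stabilizer Γ y} : Set X) = ∅ :=
      Set.eq_empty_of_isEmpty _
    rw [h2, Set.ncard_empty] at h1
    have h3 : 0 < {y' : Y | stabilizer Γ y' = stabilizer Γ y}.ncard :=
      (Set.ncard_pos (Set.toFinite _)).2 ⟨y, rfl⟩
    omega
  exact ⟨Equiv.equivOfIsEmpty X Y, fun σ x => isEmptyElim x⟩

private lemma exists_equivariant (Γ : Type*) [Group Γ] :
    ∀ (n : ℕ) (X : Type*) (Y : Type*) [Finite X] [Finite Y] [MulAction Γ X] [MulAction Γ Y],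
      Nat.card X ≤ n →
      (∀ (g : Γ) (x : X), stabilizer Γ (g • x) = stabilizer Γ x) →
      (∀ (g : Γ) (y : Y), stabilizer Γ (g • y) = stabilizer Γ y) →
      (∀ H : Subgroup Γ, {x : X | stabilizer Γ x = H}.ncard
        = {y : Y | stabilizer Γ y = H}.ncard) →
      ∃ e : X ≃ Y, ∀ (σ : Γ) (x : X), e (σ • x) = σ • e x := by
  intro n
  induction n with
  | zero =>
    intro X Y _ _ _ _ hcard hcX hcY hcnt
    haveI : IsEmpty X :=
      (Nat.card_eq_zero.1 (Nat.le_zero.1 hcard)).resolve_right (not_infinite_iff_finite.2 ‹_›)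
    exact equivariant_of_isEmpty X Y hcnt
  | succ n ih =>
    intro X Y _ _ _ _ hcard hcX hcY hcnt
    classical
    rcases isEmpty_or_nonempty X with hE | hNE
    · exact equivariant_of_isEmpty X Y hcnt
    obtain ⟨x₀⟩ := hNE
    -- find a matching point y₀
    have hy : {y : Y | stabilizer Γ y = stabilizer Γ x₀}.Nonempty := by
      apply (Set.ncard_pos (Set.toFinite _)).1
      rw [← hcnt]
      exact (Set.ncard_pos (Set.toFinite _)).2 ⟨x₀, rfl⟩
    obtain ⟨y₀, hy₀⟩ := hy
    rw [Set.mem_setOf_eq] at hy₀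
    -- the orbit map
    have hFex : ∀ x ∈ orbit Γ x₀, ∃ y : Y, ∀ g : Γ, g • x₀ = x → g • y₀ = y := by
      intro x hx
      obtain ⟨g, hg⟩ := mem_orbit_iff.1 hx
      exact ⟨g • y₀, fun g' hg' => transfer x₀ y₀ hy₀.symm g' g (hg'.trans hg.symm)⟩
    choose F hF using hFex
    have hFB : ∀ (x : X) (hx : x ∈ orbit Γ x₀), F x hx ∈ orbit Γ y₀ := by
      intro x hx
      obtain ⟨g, hg⟩ := mem_orbit_iff.1 hx
      rw [← hF x hx g hg]
      exact mem_orbit_iff.2 ⟨g, rfl⟩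
    -- orbits have equal cardinality
    have horb : (orbit Γ x₀).ncard = (orbit Γ y₀).ncard := by
      rw [← Nat.card_coe_set_eq, ← Nat.card_coe_set_eq]
      calc Nat.card ↥(orbit Γ x₀) = Nat.card (Γ ⧸ stabilizer Γ x₀) :=
            Nat.card_congr (orbitEquivQuotientStabilizer Γ x₀)
        _ = (stabilizer Γ x₀).index := rfl
        _ = (stabilizer Γ y₀).index := by rw [hy₀]
        _ = Nat.card (Γ ⧸ stabilizer Γ y₀) := rfl
        _ = Nat.card ↥(orbit Γ y₀) := (Nat.card_congr (orbitEquivQuotientStabilizer Γ y₀)).symm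
    -- complements are invariant
    have hAinv : ∀ (σ : Γ) (x : X), x ∈ (orbit Γ x₀)ᶜ → σ • x ∈ (orbit Γ x₀)ᶜ := by
      intro σ x hx hmem
      obtain ⟨g, hg⟩ := mem_orbit_iff.1 hmem
      exact hx (mem_orbit_iff.2 ⟨σ⁻¹ * g, by rw [mul_smul, hg, inv_smul_smul]⟩)
    have hBinv : ∀ (σ : Γ) (y : Y), y ∈ (orbit Γ y₀)ᶜ → σ • y ∈ (orbit Γ y₀)ᶜ := by
      intro σ y hy hmem
      obtain ⟨g, hg⟩ := mem_orbit_iff.1 hmem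
      exact hy (mem_orbit_iff.2 ⟨σ⁻¹ * g, by rw [mul_smul, hg, inv_smul_smul]⟩)
    letI actX : MulAction Γ ↥((orbit Γ x₀)ᶜ) :=
      { smul := fun σ z => ⟨σ • (z : X), hAinv σ z z.2⟩
        one_smul := fun z => Subtype.ext (one_smul Γ (z : X))
        mul_smul := fun σ τ z => Subtype.ext (mul_smul σ τ (z : X)) }
    letI actY : MulAction Γ ↥((orbit Γ y₀)ᶜ) :=
      { smul := fun σ z => ⟨σ • (z : Y), hBinv σ z z.2⟩
        one_smul := fun z => Subtype.ext (one_smul Γ (z : Y))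
        mul_smul := fun σ τ z => Subtype.ext (mul_smul σ τ (z : Y)) }
    have hsmulX : ∀ (σ : Γ) (z : ↥((orbit Γ x₀)ᶜ)), ((σ • z : ↥((orbit Γ x₀)ᶜ)) : X) = σ • (z : X) :=
      fun _ _ => rfl
    have hsmulY : ∀ (σ : Γ) (z : ↥((orbit Γ y₀)ᶜ)), ((σ • z : ↥((orbit Γ y₀)ᶜ)) : Y) = σ • (z : Y) :=
      fun _ _ => rfl
    have hstabX : ∀ z : ↥((orbit Γ x₀)ᶜ), stabilizer Γ z = stabilizer Γ (z : X) := by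
      intro z
      ext τ
      rw [mem_stabilizer_iff, mem_stabilizer_iff, ← hsmulX τ z]
      exact ⟨fun h => by rw [h], fun h => Subtype.ext h⟩
    have hstabY : ∀ z : ↥((orbit Γ y₀)ᶜ), stabilizer Γ z = stabilizer Γ (z : Y) := by
      intro z
      ext τ
      rw [mem_stabilizer_iff, mem_stabilizer_iff, ← hsmulY τ z]
      exact ⟨fun h => by rw [h], fun h => Subtype.ext h⟩
    have hcX' : ∀ (g : Γ) (z : ↥((orbit Γ x₀)ᶜ)), stabilizer Γ (g • z) = stabilizer Γ z := by
      intro g z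
      rw [hstabX, hstabX, hsmulX]
      exact hcX g (z : X)
    have hcY' : ∀ (g : Γ) (z : ↥((orbit Γ y₀)ᶜ)), stabilizer Γ (g • z) = stabilizer Γ z := by
      intro g z
      rw [hstabY, hstabY, hsmulY]
      exact hcY g (z : Y)
    -- counting on complements
    have hsubX : ∀ H : Subgroup Γ, {z : ↥((orbit Γ x₀)ᶜ) | stabilizer Γ z = H}.ncard
        = ({x : X | stabilizer Γ x = H} \ orbit Γ x₀).ncard := by
      intro H
      rw [← Set.ncard_image_of_injective _ (Subtype.val_injective
        (p := fun x : X => x ∈ (orbit Γ x₀)ᶜ))]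
      congr 1
      ext x
      simp only [Set.mem_image, Set.mem_setOf_eq, Set.mem_diff]
      constructor
      · rintro ⟨z, hz, rfl⟩
        rw [hstabX] at hz
        exact ⟨hz, z.2⟩
      · rintro ⟨h1, h2⟩
        exact ⟨⟨x, h2⟩, by rw [hstabX]; exact h1, rfl⟩
    have hsubY : ∀ H : Subgroup Γ, {z : ↥((orbit Γ y₀)ᶜ) | stabilizer Γ z = H}.ncard
        = ({y : Y | stabilizer Γ y = H} \ orbit Γ y₀).ncard := by
      intro H
      rw [← Set.ncard_image_of_injective _ (Subtype.val_injective
        (p := fun y : Y => y ∈ (orbit Γ y₀)ᶜ))]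
      congr 1
      ext y
      simp only [Set.mem_image, Set.mem_setOf_eq, Set.mem_diff]
      constructor
      · rintro ⟨z, hz, rfl⟩
        rw [hstabY] at hz
        exact ⟨hz, z.2⟩
      · rintro ⟨h1, h2⟩
        exact ⟨⟨y, h2⟩, by rw [hstabY]; exact h1, rfl⟩
    have horbstabX : ∀ x ∈ orbit Γ x₀, stabilizer Γ x = stabilizer Γ x₀ := by
      intro x hx
      obtain ⟨g, rfl⟩ := mem_orbit_iff.1 hx
      exact hcX g x₀
    have horbstabY : ∀ y ∈ orbit Γ y₀, stabilizer Γ y = stabilizer Γ x₀ := by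
      intro y hy
      obtain ⟨g, rfl⟩ := mem_orbit_iff.1 hy
      rw [hcY g y₀]
      exact hy₀
    have hsplitX : ∀ H : Subgroup Γ, {x : X | stabilizer Γ x = H}.ncard
        = (if H = stabilizer Γ x₀ then (orbit Γ x₀).ncard else 0)
          + ({x : X | stabilizer Γ x = H} \ orbit Γ x₀).ncard := by
      intro H
      rw [← Set.ncard_inter_add_ncard_diff_eq_ncard {x : X | stabilizer Γ x = H} (orbit Γ x₀)
        (Set.toFinite _)]
      congr 1
      by_cases hH : H = stabilizer Γ x₀
      · rw [if_pos hH]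
        congr 1
        ext x
        simp only [Set.mem_inter_iff, Set.mem_setOf_eq]
        exact ⟨fun h => h.2, fun h => ⟨(horbstabX x h).trans hH.symm, h⟩⟩
      · rw [if_neg hH, Set.ncard_eq_zero (Set.toFinite _)]
        ext x
        simp only [Set.mem_inter_iff, Set.mem_setOf_eq, Set.mem_empty_iff_false, iff_false]
        rintro ⟨h1, h2⟩
        exact hH (h1 ▸ horbstabX x h2)
    have hsplitY : ∀ H : Subgroup Γ, {y : Y | stabilizer Γ y = H}.ncard
        = (if H = stabilizer Γ x₀ then (orbit Γ y₀).ncard else 0)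
          + ({y : Y | stabilizer Γ y = H} \ orbit Γ y₀).ncard := by
      intro H
      rw [← Set.ncard_inter_add_ncard_diff_eq_ncard {y : Y | stabilizer Γ y = H} (orbit Γ y₀)
        (Set.toFinite _)]
      congr 1
      by_cases hH : H = stabilizer Γ x₀
      · rw [if_pos hH]
        congr 1
        ext y
        simp only [Set.mem_inter_iff, Set.mem_setOf_eq]
        exact ⟨fun h => h.2, fun h => ⟨(horbstabY y h).trans hH.symm, h⟩⟩
      · rw [if_neg hH, Set.ncard_eq_zero (Set.toFinite _)]
        ext y
        simp only [Set.mem_inter_iff, Set.mem_setOf_eq, Set.mem_empty_iff_false, iff_false]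
        rintro ⟨h1, h2⟩
        exact hH (h1 ▸ horbstabY y h2)
    have hcnt' : ∀ H : Subgroup Γ, {z : ↥((orbit Γ x₀)ᶜ) | stabilizer Γ z = H}.ncard
        = {z : ↥((orbit Γ y₀)ᶜ) | stabilizer Γ z = H}.ncard := by
      intro H
      have h3 := hcnt H
      rw [hsplitX H, hsplitY H, horb] at h3
      rw [hsubX, hsubY]
      exact Nat.add_left_cancel h3
    -- cardinality bound
    have hle : Nat.card ↥((orbit Γ x₀)ᶜ) ≤ n := by
      have h1 : 1 ≤ (orbit Γ x₀).ncard :=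
        (Set.ncard_pos (Set.toFinite _)).2 ⟨x₀, mem_orbit_self x₀⟩
      have h2 := Set.ncard_add_ncard_compl (orbit Γ x₀) (Set.toFinite _) (Set.toFinite _)
      rw [Nat.card_coe_set_eq]
      omega
    obtain ⟨e', he'⟩ := ih ↥((orbit Γ x₀)ᶜ) ↥((orbit Γ y₀)ᶜ) hle hcX' hcY' hcnt'
    -- assemble the bijection
    set f : X → Y := fun x => if h : x ∈ orbit Γ x₀ then F x h else ↑(e' ⟨x, h⟩) with hfdef
    have hfa : ∀ (x : X) (h : x ∈ orbit Γ x₀), f x = F x h := fun x h => dif_pos h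
    have hfb : ∀ (x : X) (h : x ∉ orbit Γ x₀), f x = ↑(e' ⟨x, h⟩) := fun x h => dif_neg h
    have hinj : Function.Injective f := by
      intro x₁ x₂ hx
      by_cases h1 : x₁ ∈ orbit Γ x₀ <;> by_cases h2 : x₂ ∈ orbit Γ x₀
      · rw [hfa x₁ h1, hfa x₂ h2] at hx
        obtain ⟨g1, hg1⟩ := mem_orbit_iff.1 h1
        obtain ⟨g2, hg2⟩ := mem_orbit_iff.1 h2
        rw [← hF x₁ h1 g1 hg1, ← hF x₂ h2 g2 hg2] at hx
        have h3 := transfer y₀ x₀ hy₀ g1 g2 hx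
        rw [← hg1, ← hg2, h3]
      · exfalso
        rw [hfa x₁ h1, hfb x₂ h2] at hx
        have h3 := hFB x₁ h1
        rw [hx] at h3
        exact (e' ⟨x₂, h2⟩).2 h3
      · exfalso
        rw [hfb x₁ h1, hfa x₂ h2] at hx
        have h3 := hFB x₂ h2
        rw [← hx] at h3
        exact (e' ⟨x₁, h1⟩).2 h3
      · rw [hfb x₁ h1, hfb x₂ h2] at hx
        exact congrArg Subtype.val (e'.injective (Subtype.coe_injective hx))
    have hsurj : Function.Surjective f := by
      intro y
      by_cases hy : y ∈ orbit Γ y₀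
      · obtain ⟨g, hg⟩ := mem_orbit_iff.1 hy
        refine ⟨g • x₀, ?_⟩
        have hmem : g • x₀ ∈ orbit Γ x₀ := mem_orbit_iff.2 ⟨g, rfl⟩
        rw [hfa _ hmem, ← hF (g • x₀) hmem g rfl]
        exact hg
      · refine ⟨↑(e'.symm ⟨y, hy⟩), ?_⟩
        have hmem : (↑(e'.symm ⟨y, hy⟩) : X) ∉ orbit Γ x₀ := (e'.symm ⟨y, hy⟩).2
        rw [hfb _ hmem]
        show ↑(e' (e'.symm ⟨y, hy⟩)) = y
        rw [Equiv.apply_symm_apply]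
    refine ⟨Equiv.ofBijective f ⟨hinj, hsurj⟩, ?_⟩
    intro σ x
    show f (σ • x) = σ • f x
    by_cases h : x ∈ orbit Γ x₀
    · obtain ⟨g, hg⟩ := mem_orbit_iff.1 h
      have hσ : σ • x ∈ orbit Γ x₀ := mem_orbit_iff.2 ⟨σ * g, by rw [mul_smul, hg]⟩
      rw [hfa _ hσ, hfa _ h, ← hF x h g hg,
        ← hF (σ • x) hσ (σ * g) (by rw [mul_smul, hg]), mul_smul]
    · have hσ : σ • x ∉ orbit Γ x₀ := fun hc => by
        obtain ⟨g, hg⟩ := mem_orbit_iff.1 hc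
        exact h (mem_orbit_iff.2 ⟨σ⁻¹ * g, by rw [mul_smul, hg, inv_smul_smul]⟩)
      rw [hfb _ hσ, hfb _ h]
      calc (↑(e' ⟨σ • x, hσ⟩) : Y) = ↑(e' (σ • (⟨x, h⟩ : ↥((orbit Γ x₀)ᶜ)))) := rfl
        _ = ↑(σ • e' ⟨x, h⟩) := by rw [he' σ ⟨x, h⟩]
        _ = σ • (↑(e' ⟨x, h⟩) : Y) := rfl

open MulAction


private lemma index_eq_ncard_orbit {Γ : Type*} [Group Γ] {Z : Type*} [MulAction Γ Z] (z : Z) :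
    (stabilizer Γ z).index = (orbit Γ z).ncard := by
  rw [← Nat.card_coe_set_eq]
  exact (Nat.card_congr (orbitEquivQuotientStabilizer Γ z)).symm

private lemma stab_conj_invariant {Γ : Type*} [Group Γ] [Finite Γ] {Z : Type*} [MulAction Γ Z]
    (hiZ : ∀ z : Z, (stabilizer Γ z).index ≤ 2) (g : Γ) (z : Z) :
    stabilizer Γ (g • z) = stabilizer Γ z := by
  ext τ
  rw [mem_stabilizer_iff, mem_stabilizer_iff]
  constructor
  · intro ht
    have h2 : g⁻¹ * τ * g ∈ stabilizer Γ z := by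
      rw [mem_stabilizer_iff, mul_smul, mul_smul, ht, inv_smul_smul]
    exact mem_stabilizer_iff.1 ((aux_conj_mem _ (hiZ z) g τ).1 h2)
  · intro ht
    have h2 : g⁻¹ * τ * g ∈ stabilizer Γ z := (aux_conj_mem _ (hiZ z) g τ).2 ht
    have h3 : (g⁻¹ * τ * g) • z = z := mem_stabilizer_iff.1 h2
    calc τ • g • z = g • ((g⁻¹ * τ * g) • z) := by rw [mul_smul, mul_smul, smul_inv_smul]
      _ = g • z := by rw [h3]

theorem stmt_5 (Γ X Y : Type*) [Group Γ] [Finite Γ] [Finite X] [Finite Y]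
    [MulAction Γ X] [MulAction Γ Y]
    (hfix : ∀ σ : Γ, Set.ncard {x : X | σ • x = x} = Set.ncard {y : Y | σ • y = y})
    (horbX : ∀ x : X, (MulAction.orbit Γ x).ncard ≤ 2)
    (horbY : ∀ y : Y, (MulAction.orbit Γ y).ncard ≤ 2) :
    ∃ e : X ≃ Y, ∀ (σ : Γ) (x : X), e (σ • x) = σ • e x := by
  have hiX : ∀ x : X, (stabilizer Γ x).index ≤ 2 := fun x =>
    (index_eq_ncard_orbit x).le.trans (horbX x)
  have hiY : ∀ y : Y, (stabilizer Γ y).index ≤ 2 := fun y =>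
    (index_eq_ncard_orbit y).le.trans (horbY y)
  exact exists_equivariant Γ (Nat.card X) X Y le_rfl
    (stab_conj_invariant hiX) (stab_conj_invariant hiY)
    (fiberCount hfix hiX hiY)
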